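/- Let A be a finite relational structure of width one, i.e., there is a homomorphism from the power-set structure P(A) to A. Then for every set I and every filter F on I, the F-tolerant power A^I_F admits a homomorphism to A. In particular every finite structure of width one is compact. -/

import Mathlib

/-- A relational type (signature): a set of relation symbols with arities. -/
structure Sig : Type 1 where
  symb : Type
  ar : symb → ℕ

/-- A σ-structure on carrier `A`. -/
structure Str (σ : Sig) (A : Type) : Type where
  rel : ∀ r : σ.symb, (Fin (σ.ar r) → A) → Prop

/-- A homomorphism of σ-structures. -/
def IsHom {σ : Sig} {B A : Type} (SB : Str σ B) (SA : Str σ A) (h : B → A) : Prop :=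
  ∀ (r : σ.symb) (t : Fin (σ.ar r) → B), SB.rel r t → SA.rel r (fun j => h (t j))

/-- The F-tolerant power `A^I_F`. -/
def tolPow {σ : Sig} {A : Type} (SA : Str σ A) (I : Type) (F : Filter I) : Str σ (I → A) :=
  ⟨fun r t => {i | SA.rel r (fun j => t j i)} ∈ F⟩

/-- `A` is compact: every structure all of whose finite (induced) substructures admit
homomorphisms to `A` itself admits a homomorphism to `A`. -/
def StrCompact {σ : Sig} {A : Type} (SA : Str σ A) : Prop :=
  ∀ (B : Type) (SB : Str σ B),
    (∀ S : Finset B, ∃ h : B → A, ∀ (r : σ.symb) (t : Fin (σ.ar r) → B),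
      SB.rel r t → (∀ j, t j ∈ S) → SA.rel r (fun j => h (t j))) →
    ∃ h : B → A, IsHom SB SA h

/-- The power-set structure `P(A)`: universe the nonempty subsets of `A`, with
`(S₁,…,S_k) ∈ R(P(A))` iff each `S_j` equals the `j`-th projection of
`R(A) ∩ (S₁ × … × S_k)`. -/
def PStr (σ : Sig) {A : Type} (SA : Str σ A) : Str σ {S : Set A // S.Nonempty} :=
  ⟨fun r Sv => ∀ j : Fin (σ.ar r),
    {a | ∃ t : Fin (σ.ar r) → A, SA.rel r t ∧ (∀ j', t j' ∈ (Sv j').1) ∧ t j = a}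
      = (Sv j).1⟩

/-! For `f : I → A` the image filter `F.map f` lives on the finite set `A`, so its kernel (the
intersection of all its members) is itself a member: the least `S` with `f ⁻¹' S ∈ F`. Sending
`f` to this kernel is a homomorphism `A^I_F → P(A)`, because for a tuple related on an `F`-large
set of coordinates, almost every coordinate also lands inside all the kernels; composing with
`P(A) → A` gives `A^I_F → A`. Compactness follows by taking `I` the finite subsets of the given
structure with the filter `atTop`, glueing the homomorphisms of the finite substructures. -/

theorem Filter.ker_mem {α : Type*} [Finite α] (f : Filter α) : f.ker ∈ f :=
  (Filter.sInter_mem (Set.toFinite _)).2 fun _ h => h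

theorem IsHom.comp {σ : Sig} {C B A : Type} {SC : Str σ C} {SB : Str σ B} {SA : Str σ A}
    {h : B → A} {g : C → B} (hh : IsHom SB SA h) (hg : IsHom SC SB g) :
    IsHom SC SA (h ∘ g) :=
  fun r t ht => hh r _ (hg r t ht)

section TolerantPower

variable {σ : Sig} {A : Type} (SA : Str σ A) {I : Type} (F : Filter I)

def tolPowToPStr [Finite A] [F.NeBot] (f : I → A) : {S : Set A // S.Nonempty} :=
  ⟨(F.map f).ker, Filter.nonempty_of_mem (F.map f).ker_mem⟩

theorem isHom_tolPowToPStr [Finite A] [F.NeBot] :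
    IsHom (tolPow SA I F) (PStr σ SA) (tolPowToPStr F) := by
  intro r t ht j
  apply Set.Subset.antisymm
  · rintro _ ⟨u, -, hu, rfl⟩
    exact hu j
  · have hker (j') : t j' ⁻¹' (F.map (t j')).ker ∈ F := Filter.mem_map.1 (Filter.ker_mem _)
    have hlarge :
        {i | SA.rel r (fun j' => t j' i)} ∩ ⋂ j', t j' ⁻¹' (F.map (t j')).ker ∈ F :=
      Filter.inter_mem ht (Filter.iInter_mem.2 hker)
    refine fun a ha => Filter.mem_ker.1 ha _ (Filter.mem_map.2 (Filter.mem_of_superset hlarge ?_))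
    rintro i ⟨hrel, hin⟩
    exact ⟨fun j' => t j' i, hrel, Set.mem_iInter.1 hin, rfl⟩

theorem exists_isHom_tolPow_of_widthOne [Finite A] [F.NeBot] {ψ : {S : Set A // S.Nonempty} → A}
    (hψ : IsHom (PStr σ SA) SA ψ) : ∃ φ : (I → A) → A, IsHom (tolPow SA I F) SA φ :=
  ⟨ψ ∘ tolPowToPStr F, hψ.comp (isHom_tolPowToPStr SA F)⟩

end TolerantPower

theorem strCompact_of_isHom_tolPow_atTop {σ : Sig} {A : Type} (SA : Str σ A)
    (htol : ∀ B : Type,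
      ∃ φ : (Finset B → A) → A, IsHom (tolPow SA (Finset B) Filter.atTop) SA φ) :
    StrCompact SA := by
  classical
  intro B SB hloc
  choose h hh using hloc
  obtain ⟨φ, hφ⟩ := htol B
  refine ⟨fun b => φ (fun S => h S b), fun r t ht => hφ r _ ?_⟩
  filter_upwards [Filter.eventually_ge_atTop (Finset.univ.image t)] with S hS
  exact hh S r t ht fun j => hS (Finset.mem_image_of_mem t (Finset.mem_univ j))

/-- A finite structure of width one (i.e. `P(A) → A`) has all its tolerant powers
mapping to it, and is compact. -/
theorem stmt5 (σ : Sig) (A : Type) [Finite A] (SA : Str σ A)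
    (hw1 : ∃ ψ : {S : Set A // S.Nonempty} → A, IsHom (PStr σ SA) SA ψ) :
    (∀ (I : Type) (F : Filter I), F.NeBot →
      ∃ φ : (I → A) → A, IsHom (tolPow SA I F) SA φ) ∧ StrCompact SA := by
  obtain ⟨ψ, hψ⟩ := hw1
  have htol (I : Type) (F : Filter I) (_ : F.NeBot) :
      ∃ φ : (I → A) → A, IsHom (tolPow SA I F) SA φ :=
    exists_isHom_tolPow_of_widthOne SA F hψ
  exact ⟨htol, strCompact_of_isHom_tolPow_atTop SA fun B => htol _ _ Filter.atTop_neBot⟩
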